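/- arXiv:2302.02348 — 5 statements merged into one kernel-verified Lean document; each statement's English description precedes it below -/
import Mathlib

section
/- Let X and Y be topological spaces, f : X → Y a continuous map, and λ an infinite cardinal. Suppose E ⊆ f[X] is a set with |E| = d(E) = λ (where E carries the subspace topology from Y), and suppose d(f⁻¹(y)) ≤ λ for every y ∈ E. Then there exists a subset F of f⁻¹[E] that is dense in the subspace f⁻¹[E] and satisfies |F| = d(F) = λ. -/
open Cardinal Set Function

universe u

noncomputable section

/-- The density of a topological space: least cardinality of a dense subset. -/
def tdensity (X : Type u) [TopologicalSpace X] : Cardinal.{u} :=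
  sInf {c : Cardinal.{u} | ∃ s : Set X, Dense s ∧ #s = c}

/-- The weight of a topological space: least cardinality of a base. -/
def tweight (X : Type u) [TopologicalSpace X] : Cardinal.{u} :=
  sInf {c : Cardinal.{u} | ∃ B : Set (Set X), TopologicalSpace.IsTopologicalBasis B ∧ #B = c}

/-- The π-weight: least cardinality of a π-base. -/
def piWeight (X : Type u) [TopologicalSpace X] : Cardinal.{u} :=
  sInf {c : Cardinal.{u} | ∃ B : Set (Set X),
    (∀ U ∈ B, IsOpen U ∧ U.Nonempty) ∧
    (∀ V : Set X, IsOpen V → V.Nonempty → ∃ U ∈ B, U ⊆ V) ∧ #B = c}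

/-- ĉ(X): the least cardinal κ such that X has no pairwise disjoint family of κ
nonempty open sets. -/
def hatCell (X : Type u) [TopologicalSpace X] : Cardinal.{u} :=
  sInf {c : Cardinal.{u} | ¬ ∃ 𝒰 : Set (Set X),
    (∀ U ∈ 𝒰, IsOpen U ∧ U.Nonempty) ∧ 𝒰.PairwiseDisjoint id ∧ #𝒰 = c}

/-- `H` is a closed G_λ set: closed and the intersection of at most λ open sets. -/
def IsClosedGLambda (lam : Cardinal.{u}) {X : Type u} [TopologicalSpace X] (H : Set X) : Prop :=
  IsClosed H ∧ ∃ 𝒰 : Set (Set X), (∀ U ∈ 𝒰, IsOpen U) ∧ #𝒰 ≤ lam ∧ H = ⋂₀ 𝒰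

/-- X ∈ Γ(λ): every closed G_λ set has density ≤ λ. -/
def InGamma (lam : Cardinal.{u}) (X : Type u) [TopologicalSpace X] : Prop :=
  ∀ H : Set X, IsClosedGLambda lam H → tdensity ↥H ≤ lam

/-- `S` witnesses `X ∈ Δ(λ)`. -/
def DeltaWitness (lam : Cardinal.{u}) (X : Type u) [TopologicalSpace X] (S : Set X) : Prop :=
  Dense S ∧
  (∀ T : Set X, T ⊆ S → #T < lam → tweight ↥(closure T) < lam) ∧
  (∀ (Y : Type u) (_ : TopologicalSpace Y), T2Space Y → ∀ f : X → Y,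
     Continuous f → Surjective f → tweight Y = lam → #(f '' S) = lam)

/-- X ∈ Δ(λ). -/
def InDelta (lam : Cardinal.{u}) (X : Type u) [TopologicalSpace X] : Prop :=
  lam ≤ tweight X ∧ ∃ S : Set X, DeltaWitness lam X S

/-- A canonical discrete space of cardinality `c`. -/
instance (c : Cardinal.{u}) : TopologicalSpace c.out := ⊥

instance (c : Cardinal.{u}) : DiscreteTopology c.out := ⟨rfl⟩

/-- A(μ): one-point compactification of a discrete space of cardinality μ. -/
def ACompact (μ : Cardinal.{u}) : Type u := OnePoint μ.out

instance (μ : Cardinal.{u}) : TopologicalSpace (ACompact μ) :=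
  inferInstanceAs (TopologicalSpace (OnePoint μ.out))

/-- A(μ)^κ. -/
def APow (μ κ : Cardinal.{u}) : Type u := κ.out → ACompact μ

instance (μ κ : Cardinal.{u}) : TopologicalSpace (APow μ κ) :=
  inferInstanceAs (TopologicalSpace (κ.out → ACompact μ))

/-- The set of finite-support points of A(μ)^κ. -/
def finSupport (μ κ : Cardinal.{u}) : Set (APow μ κ) :=
  {x | {ξ | x ξ ≠ (OnePoint.infty : OnePoint μ.out)}.Finite}

/-- X is polyadic: a continuous image of some A(μ)^κ. -/
def IsPolyadic (X : Type u) [TopologicalSpace X] : Prop :=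
  ∃ μ κ : Cardinal.{u}, ℵ₀ ≤ μ ∧ ∃ f : APow μ κ → X, Continuous f ∧ Surjective f
lemma exists_dense_card (Z : Type u) [TopologicalSpace Z] :
    ∃ s : Set Z, Dense s ∧ #s = tdensity Z := by
  have h : {c : Cardinal.{u} | ∃ s : Set Z, Dense s ∧ #s = c}.Nonempty :=
    ⟨#(Set.univ : Set Z), Set.univ, dense_univ, rfl⟩
  obtain ⟨s, hs, hc⟩ := csInf_mem h
  exact ⟨s, hs, hc⟩

lemma tdensity_le_mk (Z : Type u) [TopologicalSpace Z] : tdensity Z ≤ #Z :=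
  csInf_le' ⟨Set.univ, dense_univ, Cardinal.mk_univ⟩

lemma dense_subtype_iff {X : Type u} [TopologicalSpace X] {A : Set X} {s : Set ↥A} :
    Dense s ↔ A ⊆ closure (Subtype.val '' s) := by
  constructor
  · intro h x hx
    have := h ⟨x, hx⟩
    rwa [closure_subtype] at this
  · intro h x
    rw [closure_subtype]
    exact h x.2

/-- Lemma 2.1 (lm:EF). -/
theorem statement0 {X Y : Type u} [TopologicalSpace X] [TopologicalSpace Y]
    (f : X → Y) (hf : Continuous f) (lam : Cardinal.{u}) (hlam : ℵ₀ ≤ lam)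
    (E : Set Y) (hE : E ⊆ range f) (hEcard : #E = lam) (hEdens : tdensity ↥E = lam)
    (hfib : ∀ y ∈ E, tdensity ↥(f ⁻¹' {y}) ≤ lam) :
    ∃ F : Set X, F ⊆ f ⁻¹' E ∧ f ⁻¹' E ⊆ closure F ∧ #F = lam ∧ tdensity ↥F = lam := by
  -- choose dense subsets of fibers
  have hch : ∀ y : E, ∃ s : Set ↥(f ⁻¹' {(y : Y)}), Dense s ∧ #s ≤ lam := by
    rintro ⟨y, hy⟩
    obtain ⟨s, hs, hcs⟩ := exists_dense_card ↥(f ⁻¹' {y})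
    exact ⟨s, hs, hcs.le.trans (hfib y hy)⟩
  choose D hDdense hDcard using hch
  set F : Set X := ⋃ y : E, Subtype.val '' D y with hF
  have hFsub : F ⊆ f ⁻¹' E := by
    rintro x hx
    simp only [hF, Set.mem_iUnion] at hx
    obtain ⟨y, ⟨z, _, rfl⟩⟩ := hx
    have : f (z : X) = (y : Y) := z.2
    simp [Set.mem_preimage, this, y.2]
  -- density: f ⁻¹' E ⊆ closure F
  have hFdense : f ⁻¹' E ⊆ closure F := by
    intro x hx
    have hd := (dense_subtype_iff.mp (hDdense ⟨f x, hx⟩))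
    have hxfib : x ∈ f ⁻¹' {f x} := rfl
    have := hd hxfib
    refine closure_mono ?_ this
    exact Set.subset_iUnion (fun y : E => Subtype.val '' D y) ⟨f x, hx⟩
  -- cardinality bounds
  have hFle : #F ≤ lam := by
    have h1 : #F ≤ #E * ⨆ y : E, #(Subtype.val '' D y) := by
      exact Cardinal.mk_iUnion_le (fun y : E => Subtype.val '' D y)
    have h2 : (⨆ y : E, #(Subtype.val '' D y)) ≤ lam :=
      ciSup_le' fun y => (Cardinal.mk_image_le).trans (hDcard y)
    calc #F ≤ #E * lam := h1.trans (by exact mul_le_mul_right h2 _)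
      _ = lam * lam := by rw [hEcard]
      _ = lam := Cardinal.mul_eq_self hlam
  have hEsub : E ⊆ f '' F := by
    intro y hy
    obtain ⟨x, hx⟩ := hE hy
    have hne : (D ⟨y, hy⟩).Nonempty := by
      haveI : Nonempty ↥(f ⁻¹' {y}) := ⟨⟨x, hx⟩⟩
      exact (hDdense ⟨y, hy⟩).nonempty
    obtain ⟨z, hz⟩ := hne
    refine ⟨z, ?_, z.2⟩
    exact Set.mem_iUnion.2 ⟨⟨y, hy⟩, Set.mem_image_of_mem _ hz⟩
  have hFge : lam ≤ #F := by
    calc lam = #E := hEcard.symm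
      _ ≤ #(f '' F) := Cardinal.mk_le_mk_of_subset hEsub
      _ ≤ #F := Cardinal.mk_image_le
  have hFcard : #F = lam := le_antisymm hFle hFge
  refine ⟨F, hFsub, hFdense, hFcard, ?_⟩
  -- density of F equals lam
  have hdle : tdensity ↥F ≤ lam := (tdensity_le_mk ↥F).trans_eq (by simpa using hFcard)
  refine le_antisymm hdle ?_
  -- any dense subset of F has cardinality ≥ lam
  obtain ⟨s, hs, hcs⟩ := exists_dense_card ↥F
  rw [← hcs]
  -- T := f '' (val '' s) is dense in E
  set T : Set Y := f '' (Subtype.val '' s) with hT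
  have hTsub : T ⊆ E := by
    rintro _ ⟨x, ⟨z, _, rfl⟩, rfl⟩
    exact hFsub z.2
  have hEcl : E ⊆ closure T := by
    intro y hy
    obtain ⟨x, hx⟩ := hE hy
    have hxE : x ∈ f ⁻¹' E := by rw [Set.mem_preimage, hx]; exact hy
    have hx' : x ∈ closure (Subtype.val '' s) := by
      have h1 : x ∈ closure F := hFdense hxE
      have h2 : F ⊆ closure (Subtype.val '' s) := dense_subtype_iff.mp hs
      have := closure_mono h2 h1
      rwa [closure_closure] at this
    have hmap : f x ∈ closure T := by
      rw [hT]
      exact Continuous.closure_preimage_subset hf T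
        (by
          apply closure_mono (s := Subtype.val '' s)
          · intro z hz
            exact Set.subset_preimage_image f _ hz
          · exact hx')
    rwa [hx] at hmap
  -- pull T back to a dense subset of E
  set s' : Set ↥E := Subtype.val ⁻¹' T with hs'
  have hs'dense : Dense s' := by
    rw [dense_subtype_iff]
    intro y hy
    have himg : Subtype.val '' s' = T := by
      rw [hs']
      rw [Subtype.image_preimage_coe]
      exact Set.inter_eq_self_of_subset_right hTsub
    rw [himg]
    exact hEcl hy
  have h1 : lam ≤ #s' := hEdens ▸ csInf_le' ⟨s', hs'dense, rfl⟩
  calc lam ≤ #s' := h1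
    _ ≤ #T := Cardinal.mk_preimage_of_injective _ _ Subtype.val_injective
    _ ≤ #(Subtype.val '' s) := Cardinal.mk_image_le
    _ ≤ #s := Cardinal.mk_image_le
end
end

section
/- Let λ be an infinite cardinal, I an index set with |I| ≤ 2^λ, and for each i ∈ I let X_i be a nonempty compact Hausdorff space with w(X_i) ≤ λ. Then the product X = ∏_{i ∈ I} X_i belongs to Γ(λ), i.e. every closed G_λ-set in X has density ≤ λ. -/
open Cardinal Set Function

universe u

noncomputable section

lemma tdensity_le_of_dense {X : Type u} [TopologicalSpace X] {s : Set X} (hs : Dense s) :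
    tdensity X ≤ #s :=
  csInf_le' ⟨s, hs, rfl⟩

lemma exists_isBasis (X : Type u) [TopologicalSpace X] :
    ∃ B : Set (Set X), TopologicalSpace.IsTopologicalBasis B ∧ #B ≤ tweight X := by
  have hne : {c : Cardinal.{u} | ∃ B : Set (Set X),
      TopologicalSpace.IsTopologicalBasis B ∧ #B = c}.Nonempty :=
    ⟨_, ⟨_, TopologicalSpace.isTopologicalBasis_opens, rfl⟩⟩
  obtain ⟨B, hB, hBc⟩ := csInf_mem hne
  exact ⟨B, hB, hBc.le⟩

lemma exists_dense_subtype {X : Type u} [TopologicalSpace X] {B : Set (Set X)}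
    (hB : TopologicalSpace.IsTopologicalBasis B) (s : Set X) :
    ∃ D : Set ↥s, Dense D ∧ #D ≤ #B := by
  classical
  have pick : ∀ p : {b : ↥B // (b.1 ∩ s).Nonempty}, ∃ x : ↥s, (x : X) ∈ p.1.1 := by
    rintro ⟨⟨b, hb⟩, ⟨x, hx, hxs⟩⟩; exact ⟨⟨x, hxs⟩, hx⟩
  choose g hg using pick
  refine ⟨Set.range g, ?_, Cardinal.mk_range_le.trans ?_⟩
  · rw [dense_iff_inter_open]
    rintro U hU ⟨⟨x, hxs⟩, hxU⟩
    rw [isOpen_induced_iff] at hU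
    obtain ⟨V, hV, rfl⟩ := hU
    obtain ⟨b, hbB, hxb, hbV⟩ := hB.exists_subset_of_mem_open hxU hV
    exact ⟨g ⟨⟨b, hbB⟩, ⟨x, hxb, hxs⟩⟩, hbV (hg ⟨⟨b, hbB⟩, ⟨x, hxb, hxs⟩⟩), Set.mem_range_self _⟩
  · exact Cardinal.mk_le_of_injective Subtype.val_injective

lemma exists_dense_of_basis {X : Type u} [TopologicalSpace X] {B : Set (Set X)}
    (hB : TopologicalSpace.IsTopologicalBasis B) :
    ∃ D : Set X, Dense D ∧ #D ≤ #B := by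
  classical
  have pick : ∀ p : {b : ↥B // b.1.Nonempty}, ∃ x : X, x ∈ p.1.1 := fun p => p.2
  choose g hg using pick
  refine ⟨Set.range g, ?_,
    Cardinal.mk_range_le.trans (Cardinal.mk_le_of_injective Subtype.val_injective)⟩
  rw [dense_iff_inter_open]
  intro U hU hUne
  obtain ⟨x, hx⟩ := hUne
  obtain ⟨b, hbB, hxb, hbU⟩ := hB.exists_subset_of_mem_open hx hU
  exact ⟨g ⟨⟨b, hbB⟩, ⟨x, hxb⟩⟩, hbU (hg ⟨⟨b, hbB⟩, ⟨x, hxb⟩⟩), Set.mem_range_self _⟩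

lemma mk_finset_le' {α : Type u} {lam : Cardinal.{u}} (hlam : ℵ₀ ≤ lam) (h : #α ≤ lam) :
    #(Finset α) ≤ lam := by
  cases finite_or_infinite α with
  | inl _ =>
    have := Fintype.ofFinite α
    exact le_trans (Cardinal.lt_aleph0_of_finite _).le hlam
  | inr _ => rw [Cardinal.mk_finset_of_infinite]; exact h

lemma exists_basis_pi {ι : Type u} (Y : ι → Type u) [∀ i, TopologicalSpace (Y i)]
    {lam : Cardinal.{u}} (hlam : ℵ₀ ≤ lam) (hι : #ι ≤ lam)
    (hw : ∀ i, tweight (Y i) ≤ lam) :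
    ∃ B : Set (Set (∀ i, Y i)), TopologicalSpace.IsTopologicalBasis B ∧ #B ≤ lam := by
  classical
  choose T hT hTc using fun i => exists_isBasis (Y i)
  have hTlam : ∀ i, #(T i) ≤ lam := fun i => (hTc i).trans (hw i)
  refine ⟨_, isTopologicalBasis_pi hT, ?_⟩
  set q : (Σ F : Finset ι, (∀ j : ↥(F : Set ι), ↥(T j.1))) → Set (∀ i, Y i) :=
    fun p => (↑p.1 : Set ι).pi
      (fun i => if h : i ∈ p.1 then (p.2 ⟨i, h⟩ : Set (Y i)) else Set.univ) with hq
  have hsub : {S | ∃ (U : ∀ i, Set (Y i)) (F : Finset ι),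
      (∀ i, i ∈ F → U i ∈ T i) ∧ S = (F : Set ι).pi U} ⊆ Set.range q := by
    rintro S ⟨U, F, hU, rfl⟩
    refine ⟨⟨F, fun j => ⟨U j.1, hU j.1 j.2⟩⟩, ?_⟩
    simp only [hq]
    apply Set.pi_congr rfl
    intro i hi
    rw [dif_pos (Finset.mem_coe.mp hi)]
  refine (Cardinal.mk_le_mk_of_subset hsub).trans (Cardinal.mk_range_le.trans ?_)
  rw [Cardinal.mk_sigma]
  have key : ∀ F : Finset ι, #(∀ j : ↥(F : Set ι), ↥(T j.1)) ≤ lam := by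
    intro F
    rw [Cardinal.mk_pi]
    calc Cardinal.prod (fun j : ↥(F : Set ι) => #(T j.1))
        ≤ Cardinal.prod (fun _ : ↥(F : Set ι) => lam) :=
          Cardinal.prod_le_prod _ _ fun j => hTlam j.1
      _ = lam ^ #↥(F : Set ι) := Cardinal.prod_const' _ _
      _ ≤ lam := Cardinal.pow_le hlam (Cardinal.lt_aleph0_of_finite _)
  calc Cardinal.sum (fun F : Finset ι => #(∀ j : ↥(F : Set ι), ↥(T j.1)))
      ≤ Cardinal.sum (fun _ : Finset ι => lam) := Cardinal.sum_le_sum _ _ key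
    _ = #(Finset ι) * lam := Cardinal.sum_const' _ _
    _ ≤ lam * lam := mul_le_mul_left (mk_finset_le' hlam hι) _
    _ = lam := Cardinal.mul_eq_self hlam

lemma hmp {ι : Type u} (Y : ι → Type u) [∀ i, TopologicalSpace (Y i)] [∀ i, Nonempty (Y i)]
    {lam : Cardinal.{u}} (hlam : ℵ₀ ≤ lam) (hι : #ι ≤ 2 ^ lam)
    (hd : ∀ i, ∃ D : Set (Y i), Dense D ∧ #D ≤ lam) :
    ∃ D : Set (∀ i, Y i), Dense D ∧ #D ≤ lam := by
  classical
  set L := lam.out with hL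
  have hLcard : #L = lam := Cardinal.mk_out lam
  haveI hLinf : Infinite L := by rw [Cardinal.infinite_iff, hLcard]; exact hlam
  haveI : Nonempty L := inferInstance
  choose Dset hDdense hDcard using hd
  have hne : ∀ i, (Dset i).Nonempty := fun i => (hDdense i).nonempty
  have hsurj : ∀ i, ∃ d : L → Y i, ∀ y ∈ Dset i, ∃ a, d a = y := by
    intro i
    have h1 : #(Dset i) ≤ #L := by rw [hLcard]; exact hDcard i
    obtain ⟨e⟩ := Cardinal.le_def _ _ |>.mp h1
    haveI : Nonempty ↥(Dset i) := (hne i).to_subtype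
    refine ⟨fun a => (Function.invFun e a : ↥(Dset i)).1, fun y hy => ?_⟩
    exact ⟨e ⟨y, hy⟩, congrArg Subtype.val (Function.leftInverse_invFun e.injective ⟨y, hy⟩)⟩
  choose d hdmem using hsurj
  have h2 : #ι ≤ #(L → Bool) := by
    have h3 : #(L → Bool) = 2 ^ lam := by
      rw [Cardinal.mk_arrow, Cardinal.mk_bool, Cardinal.lift_two, Cardinal.lift_id'.{0,u}, hLcard]
    rw [h3]; exact hι
  obtain ⟨e⟩ := Cardinal.le_def _ _ |>.mp h2
  set x : (Σ S : Finset L, ((↥(S : Set L) → Bool) → L)) → ∀ i, Y i :=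
    fun p i => d i (p.2 (fun a : ↥(p.1 : Set L) => e i a.1)) with hx
  refine ⟨Set.range x, ?_, Cardinal.mk_range_le.trans ?_⟩
  · rw [dense_iff_inter_open]
    intro U hU hUne
    obtain ⟨f, hf⟩ := hUne
    rw [isOpen_pi_iff] at hU
    obtain ⟨F, u, hu, hsub⟩ := hU f hf
    have hα : ∀ i ∈ F, ∃ a : L, d i a ∈ u i := by
      intro i hi
      obtain ⟨y, hyD, hyu⟩ := (hDdense i).exists_mem_open (hu i hi).1 ⟨f i, (hu i hi).2⟩
      obtain ⟨a, ha⟩ := hdmem i y hyD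
      exact ⟨a, ha ▸ hyu⟩
    choose αf hαf using hα
    have hsep : ∀ i ∈ F, ∀ j ∈ F, i ≠ j → ∃ a : L, e i a ≠ e j a := by
      intro i _ j _ hij
      by_contra hcon; push_neg at hcon
      exact hij (e.injective (funext hcon))
    set S : Finset L := F.biUnion (fun i => F.biUnion (fun j =>
      if h : ∃ a : L, e i a ≠ e j a then {h.choose} else ∅)) with hS
    have key : ∀ i ∈ F, ∀ j ∈ F, i ≠ j → ∃ a, a ∈ S ∧ e i a ≠ e j a := by
      intro i hi j hj hij
      have h := hsep i hi j hj hij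
      refine ⟨h.choose, ?_, h.choose_spec⟩
      rw [hS, Finset.mem_biUnion]
      refine ⟨i, hi, ?_⟩
      rw [Finset.mem_biUnion]
      refine ⟨j, hj, ?_⟩
      rw [dif_pos h]
      exact Finset.mem_singleton_self _
    have hpat : ∀ pat : ↥(S : Set L) → Bool, ∃ b : L,
        ∀ i (hi : i ∈ F), (fun a : ↥(S : Set L) => e i a.1) = pat → d i b ∈ u i := by
      intro pat
      by_cases h : ∃ i, i ∈ F ∧ (fun a : ↥(S : Set L) => e i a.1) = pat
      · obtain ⟨i0, hi0, hpat0⟩ := h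
        refine ⟨αf i0 hi0, fun i hi hpi => ?_⟩
        have hii : i = i0 := by
          by_contra hne'
          obtain ⟨a, haS, hane⟩ := key i hi i0 hi0 hne'
          exact hane (congrFun (hpi.trans hpat0.symm) ⟨a, Finset.mem_coe.mpr haS⟩)
        subst hii; exact hαf i hi
      · exact ⟨Classical.arbitrary L, fun i hi hpi => absurd ⟨i, hi, hpi⟩ h⟩
    choose σ hσ using hpat
    refine ⟨x ⟨S, σ⟩, hsub ?_, Set.mem_range_self _⟩
    intro i hi
    exact hσ _ i (Finset.mem_coe.mp hi) rfl
  · rw [Cardinal.mk_sigma]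
    have key : ∀ S : Finset L, #((↥(S : Set L) → Bool) → L) ≤ lam := by
      intro S
      rw [← Cardinal.power_def, hLcard]
      exact Cardinal.pow_le hlam (Cardinal.lt_aleph0_of_finite _)
    calc Cardinal.sum (fun S : Finset L => #((↥(S : Set L) → Bool) → L))
        ≤ Cardinal.sum (fun _ : Finset L => lam) := Cardinal.sum_le_sum _ _ key
      _ = #(Finset L) * lam := Cardinal.sum_const' _ _
      _ = lam * lam := by rw [Cardinal.mk_finset_of_infinite, hLcard]
      _ = lam := Cardinal.mul_eq_self hlam

/-- Theorem 2.3 (tm:pr). -/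
theorem statement2 (lam : Cardinal.{u}) (hlam : ℵ₀ ≤ lam)
    {I : Type u} (hI : #I ≤ 2 ^ lam)
    (X : I → Type u) [∀ i, TopologicalSpace (X i)]
    [∀ i, CompactSpace (X i)] [∀ i, T2Space (X i)] [∀ i, Nonempty (X i)]
    (hw : ∀ i, tweight (X i) ≤ lam) :
    InGamma lam (∀ i, X i) := by
  classical
  intro H hH
  obtain ⟨hHcl, 𝒰, h𝒰open, h𝒰card, hHeq⟩ := hH
  have hHcomp : IsCompact H := hHcl.isCompact
  -- Step 1: each U ∈ 𝒰 depends on finitely many coordinates over H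
  have step1 : ∀ U ∈ 𝒰, ∃ J : Set I, J.Finite ∧
      ∀ x ∈ H, ∀ y : ∀ i, X i, (∀ i ∈ J, y i = x i) → y ∈ U := by
    intro U hU
    have hUopen := h𝒰open U hU
    have hHU : H ⊆ U := by rw [hHeq]; exact Set.sInter_subset_of_mem hU
    rw [isOpen_pi_iff] at hUopen
    have hx : ∀ x (_ : x ∈ H), ∃ (F : Finset I) (u : ∀ i, Set (X i)),
        (∀ i, i ∈ F → IsOpen (u i) ∧ x i ∈ u i) ∧ (F : Set I).pi u ⊆ U :=
      fun x hxH => hUopen x (hHU hxH)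
    choose Fx ux hux hsubx using hx
    obtain ⟨t, ht⟩ := hHcomp.elim_nhds_subcover'
      (fun x hxH => (Fx x hxH : Set I).pi (ux x hxH))
      (fun x hxH => (isOpen_set_pi (Finset.finite_toSet _)
        (fun a ha => (hux x hxH a (Finset.mem_coe.mp ha)).1)).mem_nhds
        (fun a ha => (hux x hxH a (Finset.mem_coe.mp ha)).2))
    refine ⟨⋃ z ∈ t, (Fx z.1 z.2 : Set I),
      Set.Finite.biUnion t.finite_toSet (fun _ _ => Finset.finite_toSet _), ?_⟩
    intro x hxH y hy
    have hxcov := ht hxH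
    rw [Set.mem_iUnion₂] at hxcov
    obtain ⟨z, hzt, hzpi⟩ := hxcov
    refine hsubx z.1 z.2 ?_
    intro i hi
    have hiJ : i ∈ ⋃ z ∈ t, (Fx z.1 z.2 : Set I) :=
      Set.mem_biUnion hzt hi
    rw [hy i hiJ]
    exact hzpi i hi
  choose JU hJUfin hJUprop using step1
  set J : Set I := ⋃ U : ↥𝒰, JU U.1 U.2 with hJdef
  have hJcard : #J ≤ lam := by
    calc #J ≤ Cardinal.sum (fun U : ↥𝒰 => #(JU U.1 U.2)) := Cardinal.mk_iUnion_le_sum_mk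
      _ ≤ Cardinal.sum (fun _ : ↥𝒰 => lam) :=
          Cardinal.sum_le_sum _ _ (fun U => ((hJUfin U.1 U.2).lt_aleph0).le.trans hlam)
      _ = #𝒰 * lam := Cardinal.sum_const' _ _
      _ ≤ lam * lam := mul_le_mul_left h𝒰card _
      _ = lam := Cardinal.mul_eq_self hlam
  have hJ : ∀ x ∈ H, ∀ y : ∀ i, X i, (∀ i ∈ J, y i = x i) → y ∈ H := by
    intro x hx y hy
    rw [hHeq]
    refine Set.mem_sInter.mpr fun U hU => ?_
    refine hJUprop U hU x hx y fun i hi => hy i ?_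
    exact Set.mem_iUnion.mpr ⟨⟨U, hU⟩, hi⟩
  -- the two half-products
  haveI : ∀ i, Nonempty (X i) := inferInstance
  set p : ∀ i, X i := fun i => Classical.arbitrary (X i) with hp
  set glue : (∀ j : ↥J, X j.1) → ∀ i, X i :=
    fun z i => if h : i ∈ J then z ⟨i, h⟩ else p i with hglue
  have hgluecont : Continuous glue := by
    apply continuous_pi
    intro i
    by_cases h : i ∈ J
    · simp only [hglue, dif_pos h]
      exact continuous_apply _
    · simp only [hglue, dif_neg h]
      exact continuous_const
  set K : Set (∀ j : ↥J, X j.1) := glue ⁻¹' H with hK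
  obtain ⟨BZ, hBZ, hBZc⟩ := exists_basis_pi (fun j : ↥J => X j.1) hlam hJcard (fun j => hw j.1)
  obtain ⟨DK, hDKdense, hDKcard⟩ := exists_dense_subtype hBZ K
  have hDKlam : #DK ≤ lam := hDKcard.trans hBZc
  obtain ⟨E, hEdense, hEcard⟩ := hmp (fun j : {i // i ∉ J} => X j.1) hlam
    ((Cardinal.mk_subtype_le _).trans hI)
    (fun j => by
      obtain ⟨B, hB, hBc⟩ := exists_isBasis (X j.1)
      obtain ⟨D, hD, hDc⟩ := exists_dense_of_basis hB
      exact ⟨D, hD, hDc.trans (hBc.trans (hw _))⟩)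
  -- merge
  set m0 : ↥K × (∀ j : {i // i ∉ J}, X j.1) → ∀ i, X i :=
    fun q i => if h : i ∈ J then q.1.1 ⟨i, h⟩ else q.2 ⟨i, h⟩ with hm0
  have hm0H : ∀ q, m0 q ∈ H := by
    intro q
    refine hJ (glue q.1.1) q.1.2 (m0 q) ?_
    intro i hi
    simp only [hm0, hglue, dif_pos hi]
  set m : ↥K × (∀ j : {i // i ∉ J}, X j.1) → ↥H := fun q => ⟨m0 q, hm0H q⟩ with hm
  set S : Set ↥H := m '' (DK ×ˢ E) with hS
  have hScard : #S ≤ lam := by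
    calc #S ≤ #(DK ×ˢ E) := Cardinal.mk_image_le
      _ = #(↥DK × ↥E) := Cardinal.mk_congr (Equiv.Set.prod _ _)
      _ = #DK * #E := by rw [Cardinal.mk_prod, Cardinal.lift_id, Cardinal.lift_id]
      _ ≤ lam * lam := mul_le_mul' hDKlam hEcard
      _ = lam := Cardinal.mul_eq_self hlam
  have hSdense : Dense S := by
    rw [dense_iff_inter_open]
    intro U hU hUne
    rw [isOpen_induced_iff] at hU
    obtain ⟨V, hV, rfl⟩ := hU
    obtain ⟨⟨h0, hh0H⟩, hh0V⟩ := hUne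
    rw [isOpen_pi_iff] at hV
    obtain ⟨F, u, hu, hsub⟩ := hV h0 hh0V
    -- the J half
    set OZ : Set (∀ j : ↥J, X j.1) := Set.pi {j : ↥J | j.1 ∈ F} (fun j => u j.1) with hOZ
    have hOZopen : IsOpen OZ := isOpen_set_pi
      ((F.finite_toSet).preimage (Subtype.val_injective.injOn))
      (fun j hj => (hu j.1 hj).1)
    set h0J : ∀ j : ↥J, X j.1 := fun j => h0 j.1 with hh0J
    have hh0JK : h0J ∈ K := by
      refine hJ h0 hh0H (glue h0J) ?_
      intro i hi
      simp only [hglue, hh0J, dif_pos hi]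
    have hh0JOZ : h0J ∈ OZ := fun j hj => (hu j.1 hj).2
    obtain ⟨dz, hdzOZ, hdzDK⟩ := dense_iff_inter_open.mp hDKdense
      (Subtype.val ⁻¹' OZ) (hOZopen.preimage continuous_subtype_val)
      ⟨⟨h0J, hh0JK⟩, hh0JOZ⟩
    -- the complement half
    set OW : Set (∀ j : {i // i ∉ J}, X j.1) :=
      Set.pi {j : {i // i ∉ J} | j.1 ∈ F} (fun j => u j.1) with hOW
    have hOWopen : IsOpen OW := isOpen_set_pi
      ((F.finite_toSet).preimage (Subtype.val_injective.injOn))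
      (fun j hj => (hu j.1 hj).1)
    have hOWne : OW.Nonempty := ⟨fun j => h0 j.1, fun j hj => (hu j.1 hj).2⟩
    obtain ⟨ew, hewOW, hewE⟩ := dense_iff_inter_open.mp hEdense OW hOWopen hOWne
    refine ⟨m (dz, ew), ?_, ⟨(dz, ew), ⟨hdzDK, hewE⟩, rfl⟩⟩
    show m0 (dz, ew) ∈ V
    refine hsub ?_
    intro i hi
    by_cases h : i ∈ J
    · simp only [hm0, dif_pos h]
      exact hdzOZ (⟨i, h⟩ : ↥J) (Finset.mem_coe.mp hi)
    · simp only [hm0, dif_neg h]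
      exact hewOW (⟨i, h⟩ : {i // i ∉ J}) (Finset.mem_coe.mp hi)
  exact (tdensity_le_of_dense hSdense).trans hScard
end
end

section
/- Let λ be an infinite cardinal and let X = ∏_{i ∈ I} X_i be a product of compact Hausdorff spaces. If H ⊆ X is a closed set which is the intersection of at most λ open subsets of X, then there is a set J ⊆ I with |J| ≤ λ such that H depends only on the coordinates in J, i.e. H = p_J⁻¹[p_J[H]], where p_J : X → ∏_{i ∈ J} X_i is the projection. -/
open Cardinal Set Function

universe u

noncomputable section

/-- a closed G_λ set in a product of compacta depends on at most λ coordinates. -/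
theorem statement3 (lam : Cardinal.{u}) (hlam : ℵ₀ ≤ lam)
    {I : Type u} (X : I → Type u) [∀ i, TopologicalSpace (X i)]
    [∀ i, CompactSpace (X i)] [∀ i, T2Space (X i)]
    (H : Set (∀ i, X i)) (hHcl : IsClosed H)
    (𝒰 : Set (Set (∀ i, X i))) (h𝒰 : ∀ U ∈ 𝒰, IsOpen U) (h𝒰card : #𝒰 ≤ lam)
    (hH : H = ⋂₀ 𝒰) :
    ∃ J : Set I, #J ≤ lam ∧
      H = (fun (x : ∀ i, X i) (j : J) => x j) ⁻¹'
            ((fun (x : ∀ i, X i) (j : J) => x j) '' H) := by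
    classical
  have hcomp : IsCompact H := hHcl.isCompact
  -- key: for each open U ⊇ H, a finite set of coordinates determining membership from H
  have key : ∀ U ∈ 𝒰, ∃ JU : Set I, JU.Finite ∧
      ∀ x ∈ H, ∀ y : ∀ i, X i, (∀ j ∈ JU, x j = y j) → y ∈ U := by
    intro U hU
    have hHU : H ⊆ U := by
      rw [hH]; exact sInter_subset_of_mem hU
    have hUopen := h𝒰 U hU
    -- for each x ∈ H, a basic box neighborhood inside U
    have hbox : ∀ x : H, ∃ (F : Finset I) (u : ∀ i, Set (X i)),
        (∀ a ∈ F, IsOpen (u a) ∧ (x : ∀ i, X i) a ∈ u a) ∧ (F : Set I).pi u ⊆ U := by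
      intro x
      exact isOpen_pi_iff.mp hUopen x (hHU x.2)
    choose F u hu hsub using hbox
    have hcover : H ⊆ ⋃ x : H, (F x : Set I).pi (u x) := by
      intro z hz
      exact mem_iUnion.mpr ⟨⟨z, hz⟩, fun a ha => (hu ⟨z, hz⟩ a ha).2⟩
    obtain ⟨t, ht⟩ := hcomp.elim_finite_subcover (fun x : H => (F x : Set I).pi (u x))
      (fun x => isOpen_set_pi (F x).finite_toSet (fun a ha => (hu x a ha).1)) hcover
    refine ⟨⋃ x ∈ t, (F x : Set I), (t.finite_toSet.biUnion fun x _ => (F x).finite_toSet), ?_⟩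
    intro x hx y hy
    obtain ⟨z, hzt, hzx⟩ : ∃ z ∈ t, x ∈ (F z : Set I).pi (u z) := by
      have := ht hx
      simpa using this
    have : y ∈ (F z : Set I).pi (u z) := by
      intro a ha
      rw [← hy a (mem_iUnion₂.mpr ⟨z, hzt, ha⟩)]
      exact hzx a ha
    exact hsub z this
  choose JU hJUfin hJU using key
  refine ⟨⋃ U : 𝒰, JU U U.2, ?_, ?_⟩
  · calc #(⋃ U : 𝒰, JU U U.2) ≤ #𝒰 * ⨆ U : 𝒰, #(JU U U.2) := mk_iUnion_le _
      _ ≤ lam * lam := by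
          refine mul_le_mul' h𝒰card (ciSup_le' fun U => ?_)
          exact le_trans (hJUfin U U.2).lt_aleph0.le hlam
      _ = lam := mul_eq_self hlam
  · apply Subset.antisymm (subset_preimage_image _ _)
    rintro x ⟨y, hyH, hxy⟩
    rw [hH]
    intro U hU
    refine hJU U hU y hyH x fun j hj => ?_
    have hjJ : j ∈ ⋃ U : 𝒰, JU U U.2 := mem_iUnion.mpr ⟨⟨U, hU⟩, hj⟩
    exact congrFun hxy ⟨j, hjJ⟩
end
end

section
/- Let X be a polyadic space of weight κ and let λ be a cardinal with d(X) ≤ λ ≤ κ. Then X ∈ Γ(λ), i.e. every closed G_λ-set in X has density ≤ λ. -/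
open Cardinal Set Function

universe u

noncomputable section

/-!
Write `X = f(A(μ)^κ)`. By Zorn's lemma `f` restricts irreducibly to a closed set `K₀`, and
irreducibility transfers smallness from `X` to `K₀`: a dense set of `X` lifts to a dense set of
`K₀`, and pairwise disjoint open sets meeting `K₀` are no more numerous than the points of a
dense subset of `X`, so on `K₀` every coordinate takes at most `λ` values.
Given a closed G_λ-set `H`, its preimage `K` is compact, so each of the `≤ λ` open sets
cutting out `K` is determined on `K` by finitely many coordinates, and membership in `K`
depends only on a set `A` of `≤ λ` coordinates. Restricted to `A`, the points of `K ∩ K₀` lie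
in a product of `≤ λ` subspaces of `A(μ)` of weight `≤ λ`, so they have a dense part of size
`≤ λ`; gluing it with the lifted dense set on the remaining coordinates gives `≤ λ` points of `K`
whose closure contains `K ∩ K₀`, and their image is dense in `H`.
-/

open Topology

namespace Cardinal

lemma mk_finset_le_of_le {α : Type u} {lam : Cardinal.{u}} (hlam : ℵ₀ ≤ lam)
    (h : #α ≤ lam) : #(Finset α) ≤ lam := by
  classical
  exact (mk_le_of_surjective List.toFinset_surjective).trans <|
    (mk_list_le_max α).trans (max_le hlam h)

lemma mk_iUnion_le_of_le {α ι : Type u} {lam : Cardinal.{u}} (hlam : ℵ₀ ≤ lam)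
    {s : ι → Set α} (hι : #ι ≤ lam) (hs : ∀ i, #(s i) ≤ lam) : #(⋃ i, s i) ≤ lam :=
  (mk_iUnion_le s).trans (mul_le_of_le hlam hι (ciSup_le' hs))

end Cardinal

lemma exists_dense_mk_eq_tdensity (X : Type u) [TopologicalSpace X] :
    ∃ D : Set X, Dense D ∧ #D = tdensity X :=
  csInf_mem (s := {c | ∃ s : Set X, Dense s ∧ #s = c}) ⟨_, univ, dense_univ, rfl⟩

lemma tdensity_le_of_subset_closure {X : Type u} [TopologicalSpace X] {H T : Set X}
    (hTH : T ⊆ H) (hHT : H ⊆ closure T) : tdensity H ≤ #T := by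
  have hdense : Dense (Subtype.val ⁻¹' T : Set H) := by
    rwa [Subtype.dense_iff, Subtype.image_preimage_coe, inter_eq_right.2 hTH]
  exact (csInf_le' (s := {c | ∃ s : Set H, Dense s ∧ #s = c}) ⟨_, hdense, rfl⟩).trans
    (mk_preimage_of_injective _ _ Subtype.val_injective)

section Product

variable {ι : Type u} {π : ι → Type v} [∀ i, TopologicalSpace (π i)]

lemma IsCompact.exists_finset_agree_mem {K U : Set (∀ i, π i)} (hK : IsCompact K)
    (hU : IsOpen U) (hKU : K ⊆ U) :
    ∃ F : Finset ι, ∀ x ∈ K, ∀ z : ∀ i, π i, (∀ i ∈ F, z i = x i) → z ∈ U := by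
  let G : Finset ι → Set (∀ i, π i) :=
    fun F => {x | ∀ z : ∀ i, π i, (∀ i ∈ F, z i = x i) → z ∈ U}
  have hG : Monotone fun F => interior (G F) :=
    fun F F' hFF' => interior_mono fun x hx z hz => hx z fun i hi => hz i (hFF' hi)
  have hcover : K ⊆ ⋃ F, interior (G F) := by
    intro x hx
    obtain ⟨I, u, hu, hIu⟩ := isOpen_pi_iff.1 hU x (hKU hx)
    have hIG : (I : Set ι).pi u ⊆ G I :=
      fun x' hx' z hz => hIu fun i hi => (hz i hi).symm ▸ hx' i hi
    exact mem_iUnion.2 ⟨I, interior_maximal hIG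
      (isOpen_set_pi I.finite_toSet fun i hi => (hu i hi).1) fun i hi => (hu i hi).2⟩
  obtain ⟨F, hF⟩ := hK.elim_directed_cover _ (fun _ => isOpen_interior) hcover hG.directed_le
  exact ⟨F, fun x hx => interior_subset (hF hx)⟩

lemma IsCompact.exists_dependsOn_of_eq_iInter {κ : Type u} {K : Set (∀ i, π i)}
    {U : κ → Set (∀ i, π i)} (hK : IsCompact K) (hU : ∀ k, IsOpen (U k)) (hKU : K = ⋂ k, U k) :
    ∃ A : Set ι, #A ≤ #κ * ℵ₀ ∧ DependsOn (· ∈ K) A := by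
  choose F hF using fun k => hK.exists_finset_agree_mem (hU k) (hKU ▸ iInter_subset _ k)
  have hmem : ∀ x ∈ K, ∀ z, (∀ i ∈ ⋃ k, (F k : Set ι), z i = x i) → z ∈ K :=
    fun x hx z hz => hKU ▸ mem_iInter.2 fun k => hF k x hx z fun i hi => hz i (mem_iUnion.2 ⟨k, hi⟩)
  refine ⟨⋃ k, (F k : Set ι), (mk_iUnion_le _).trans
    (mul_le_mul_right (ciSup_le' fun k => (F k).finite_toSet.lt_aleph0.le) _), ?_⟩
  intro x y hxy
  exact propext ⟨fun hx => hmem x hx y fun i hi => (hxy i hi).symm,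
    fun hy => hmem y hy x fun i hi => hxy i hi⟩

/-- `T` consists of the points agreeing with a point of `E` on `A` and with a point of `D₀`
off `A`. -/
lemma DependsOn.exists_subset_closure {K S D₀ : Set (∀ i, π i)} {A : Set ι}
    {E : Set (∀ i : A, π i)} (hK : DependsOn (· ∈ K) A) (hEK : E ⊆ A.domRestrict '' K)
    (hSE : A.domRestrict '' S ⊆ closure E) (hSD₀ : S ⊆ closure D₀) :
    ∃ T ⊆ K, #T ≤ #E * #D₀ ∧ S ⊆ closure T := by
  classical
  let glue : (∀ i : A, π i) → (∀ i, π i) → ∀ i, π i :=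
    fun w y i => if hi : i ∈ A then w ⟨i, hi⟩ else y i
  have hglue : Continuous (uncurry glue) := continuous_pi fun i => by
    by_cases hi : i ∈ A
    · simp only [glue, uncurry, dif_pos hi]; fun_prop
    · simp only [glue, uncurry, dif_neg hi]; fun_prop
  refine ⟨image2 glue E D₀, ?_, mk_image2_le, fun x hx => ?_⟩
  · rintro _ ⟨w, hw, y, -, rfl⟩
    obtain ⟨x, hxK, rfl⟩ := hEK hw
    have hglueK : (glue (A.domRestrict x) y ∈ K) = (x ∈ K) :=
      hK fun i hi => by simp only [glue, dif_pos hi, domRestrict_apply]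
    exact hglueK ▸ hxK
  · have hglue_self : glue (A.domRestrict x) x = x :=
      funext fun i => by by_cases hi : i ∈ A <;> simp [glue, hi]
    exact hglue_self ▸ map_mem_closure₂ hglue (hSE (mem_image_of_mem _ hx)) (hSD₀ hx)
      fun w hw y hy => mem_image2_of_mem hw hy

end Product

section Network

variable {Y β : Type u} [TopologicalSpace Y]

/-- The traces `b k ∩ C` form a network of the subspace `C`. -/
def IsRelNetwork (b : β → Set Y) (C : Set Y) : Prop :=
  ∀ y ∈ C, ∀ u, IsOpen u → y ∈ u → ∃ k, y ∈ b k ∧ b k ∩ C ⊆ u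

lemma IsRelNetwork.exists_subset_closure {b : β → Set Y} {C S : Set Y}
    (h : IsRelNetwork b C) (hS : S ⊆ C) : ∃ E ⊆ S, #E ≤ #β ∧ S ⊆ closure E := by
  choose e he using fun k : {k // (b k ∩ S).Nonempty} => k.2
  refine ⟨range e, range_subset_iff.2 fun k => (he k).2, mk_range_le.trans (mk_subtype_le _),
    fun y hy => mem_closure_iff.2 fun u hu hyu => ?_⟩
  obtain ⟨k, hyk, hku⟩ := h y (hS hy) u hu hyu
  let k' : {k // (b k ∩ S).Nonempty} := ⟨k, y, hyk, hy⟩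
  exact ⟨e k', hku ⟨(he k').1, hS (he k').2⟩, mem_range_self k'⟩

lemma IsRelNetwork.pi {ι : Type u} {b : β → Set Y} {C : Set Y} (h : IsRelNetwork b C) :
    IsRelNetwork (fun j : Finset (ι × β) => {z : ι → Y | ∀ q ∈ j, z q.1 ∈ b q.2})
      (Set.univ.pi fun _ => C) := by
  classical
  intro x hx W hW hxW
  obtain ⟨I, u, hu, hIu⟩ := isOpen_pi_iff.1 hW x hxW
  choose k hxk hk using
    fun i : I => h (x i) (hx i (Set.mem_univ _)) (u i) (hu i i.2).1 (hu i i.2).2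
  refine ⟨I.attach.image fun i => (i.1, k i), ?_, fun z ⟨hzk, hzC⟩ => hIu fun i hi => ?_⟩
  · intro q hq
    obtain ⟨i, -, rfl⟩ := Finset.mem_image.1 hq
    exact hxk i
  · exact hk ⟨i, hi⟩
      ⟨hzk _ (Finset.mem_image.2 ⟨⟨i, hi⟩, Finset.mem_attach _ _, rfl⟩), hzC i (Set.mem_univ _)⟩

end Network

namespace OnePoint

variable {Z : Type u} [TopologicalSpace Z]

def relNetwork (N : Set Z) : N ⊕ Finset N → Set (OnePoint Z)
  | .inl α => {((α : Z) : OnePoint Z)}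
  | .inr F => {y | ∀ α ∈ F, y ≠ ((α : Z) : OnePoint Z)}

lemma isRelNetwork_relNetwork [DiscreteTopology Z] (N : Set Z) :
    IsRelNetwork (relNetwork N) {y | ∀ α : Z, y = α → α ∈ N} := by
  intro y hy u hu hyu
  induction y using OnePoint.rec with
  | infty =>
    have hfin : {α : N | ((α : Z) : OnePoint Z) ∉ u}.Finite :=
      ((isOpen_iff_of_mem' hyu).1 hu).1.finite_of_discrete.preimage Subtype.val_injective.injOn
    refine ⟨.inr hfin.toFinset, fun α _ => (coe_ne_infty _).symm, fun z ⟨hz, hzN⟩ => ?_⟩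
    induction z using OnePoint.rec with
    | infty => exact hyu
    | coe α => exact by_contra fun hα => hz ⟨α, hzN α rfl⟩ (hfin.mem_toFinset.2 hα) rfl
  | coe α => exact ⟨.inl ⟨α, hy α rfl⟩, rfl, fun z ⟨hz, _⟩ => (hz : z = α) ▸ hyu⟩

end OnePoint

/-- `f` maps `K` onto `X`, and no proper closed subset of `K` onto `X`. -/
structure IsIrreducibleRestriction {P X : Type u} [TopologicalSpace P] (f : P → X)
    (K : Set P) : Prop where
  isCompact : IsCompact K
  image_eq_univ : f '' K = Set.univ
  image_diff_ne_univ : ∀ O, IsOpen O → (O ∩ K).Nonempty → f '' (K \ O) ≠ Set.univ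

lemma exists_isIrreducibleRestriction {P X : Type u} [TopologicalSpace P] [CompactSpace P]
    [TopologicalSpace X] [T1Space X] {f : P → X} (hf : Continuous f) (hsurj : Surjective f) :
    ∃ K, IsIrreducibleRestriction f K := by
  obtain ⟨K, hKc, hKf, hmin⟩ := exists_compact_surjective_zorn_subset hf hsurj
  refine ⟨K, isCompact_iff_compactSpace.2 hKc, hKf, fun O hO ⟨x, hxO, hxK⟩ hfO => ?_⟩
  refine hmin (Subtype.val ⁻¹' Oᶜ) (fun h => ?_)
    (hO.isClosed_compl.preimage continuous_subtype_val) ?_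
  · exact eq_univ_iff_forall.1 h ⟨x, hxK⟩ hxO
  · rwa [← image_image_val_eq_domRestrict_image, Subtype.image_preimage_coe, ← Set.sdiff_eq]

namespace IsIrreducibleRestriction

variable {P X : Type u} [TopologicalSpace P] [TopologicalSpace X] [T2Space X] {f : P → X}
  {K : Set P} {D : Set X}

lemma exists_mem_fiber_subset (h : IsIrreducibleRestriction f K) (hf : Continuous f)
    (hD : Dense D) {O : Set P} (hO : IsOpen O) (hOK : (O ∩ K).Nonempty) :
    ∃ d ∈ D, K ∩ f ⁻¹' {d} ⊆ O := by
  have hclosed : IsClosed (f '' (K \ O)) := ((h.isCompact.diff hO).image hf).isClosed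
  obtain ⟨d, hd, hdD⟩ := hD.inter_open_nonempty _ hclosed.isOpen_compl
    (nonempty_compl.2 (h.image_diff_ne_univ O hO hOK))
  exact ⟨d, hdD, fun x ⟨hxK, hxd⟩ => by_contra fun hxO => hd ⟨x, ⟨hxK, hxO⟩, hxd⟩⟩

lemma exists_mk_le_subset_closure (h : IsIrreducibleRestriction f K) (hf : Continuous f)
    (hD : Dense D) : ∃ D₀ : Set P, #D₀ ≤ #D ∧ K ⊆ closure D₀ := by
  choose g hgK hgf using fun d : D => h.image_eq_univ.symm ▸ mem_univ (d : X)
  refine ⟨range g, mk_range_le, fun x hx => mem_closure_iff.2 fun O hO hxO => ?_⟩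
  obtain ⟨d, hdD, hsub⟩ := h.exists_mem_fiber_subset hf hD hO ⟨x, hxO, hx⟩
  exact ⟨g ⟨d, hdD⟩, hsub ⟨hgK _, hgf _⟩, mem_range_self _⟩

lemma mk_le_of_pairwise_disjoint (h : IsIrreducibleRestriction f K) (hf : Continuous f)
    (hD : Dense D) {κ : Type u} {V : κ → Set P} (hV : ∀ i, IsOpen (V i))
    (hdisj : Pairwise (Disjoint on V)) (hVK : ∀ i, (V i ∩ K).Nonempty) : #κ ≤ #D := by
  choose d hdD hsub using fun i => h.exists_mem_fiber_subset hf hD (hV i) (hVK i)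
  refine mk_le_of_injective (f := fun i => (⟨d i, hdD i⟩ : D)) fun i j hij =>
    hdisj.eq fun hij' => ?_
  obtain ⟨x, hxK, hx⟩ : d i ∈ f '' K := h.image_eq_univ ▸ mem_univ _
  have hxj : f x = d j := hx.trans (congrArg Subtype.val hij)
  exact hij'.ne_of_mem (hsub i ⟨hxK, hx⟩) (hsub j ⟨hxK, hxj⟩) rfl

lemma mk_coordValues_le {ι Z : Type u} [TopologicalSpace Z] [DiscreteTopology Z]
    {f : (ι → OnePoint Z) → X} {K : Set (ι → OnePoint Z)} (h : IsIrreducibleRestriction f K)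
    (hf : Continuous f) (hD : Dense D) (ξ : ι) :
    #{α : Z | ∃ x ∈ K, x ξ = α} ≤ #D := by
  refine h.mk_le_of_pairwise_disjoint hf hD
    (V := fun α : {α : Z | ∃ x ∈ K, x ξ = α} => (fun x => x ξ) ⁻¹' {((α : Z) : OnePoint Z)})
    (fun α => ?_) (fun α β hαβ => ?_) (fun α => ?_)
  · rw [← image_singleton]
    exact (OnePoint.isOpen_image_coe.2 (isOpen_discrete _)).preimage (continuous_apply ξ)
  · exact disjoint_left.2 fun x hα hβ =>
      hαβ (Subtype.ext (OnePoint.coe_injective ((hα : x ξ = _).symm.trans hβ)))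
  · obtain ⟨x, hxK, hx⟩ := α.2
    exact ⟨x, hx, hxK⟩

end IsIrreducibleRestriction

lemma OnePoint.exists_subset_closure_of_dependsOn {ι Z : Type u} [TopologicalSpace Z]
    [DiscreteTopology Z] {lam : Cardinal.{u}} (hlam : ℵ₀ ≤ lam) {K K₀ D₀ : Set (ι → OnePoint Z)}
    {A : Set ι} (hK : DependsOn (· ∈ K) A) (hA : #A ≤ lam) (hK₀ : K₀ ⊆ closure D₀)
    (hD₀ : #D₀ ≤ lam) (hval : ∀ ξ ∈ A, #{α : Z | ∃ x ∈ K₀, x ξ = α} ≤ lam) :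
    ∃ T ⊆ K, #T ≤ lam ∧ K ∩ K₀ ⊆ closure T := by
  set N : Set Z := ⋃ ξ : A, {α : Z | ∃ x ∈ K₀, x ξ = α}
  have hN : #N ≤ lam := mk_iUnion_le_of_le hlam hA fun ξ => hval ξ ξ.2
  have hβ : #(A × (N ⊕ Finset N)) ≤ lam := by
    rw [mk_prod, mk_sum, lift_id, lift_id, lift_id, lift_id]
    exact mul_le_of_le hlam hA (add_le_of_le hlam hN (mk_finset_le_of_le hlam hN))
  have hS : A.domRestrict '' (K ∩ K₀) ⊆
      Set.univ.pi fun _ => {y : OnePoint Z | ∀ α : Z, y = α → α ∈ N} := by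
    rintro _ ⟨x, ⟨-, hx⟩, rfl⟩ ξ - α hα
    exact mem_iUnion.2 ⟨ξ, x, hx, hα⟩
  obtain ⟨E, hES, hE, hSE⟩ :=
    ((OnePoint.isRelNetwork_relNetwork N).pi (ι := A)).exists_subset_closure hS
  obtain ⟨T, hTK, hT, hKT⟩ := hK.exists_subset_closure
    (hES.trans (image_mono inter_subset_left)) hSE (inter_subset_right.trans hK₀)
  have hElam : #E ≤ lam := hE.trans (mk_finset_le_of_le hlam hβ)
  exact ⟨T, hTK, hT.trans (mul_le_of_le hlam hElam hD₀), hKT⟩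

theorem inGamma_of_continuous_surjective {ι Z X : Type u} [TopologicalSpace Z]
    [DiscreteTopology Z] [TopologicalSpace X] [T2Space X] {f : (ι → OnePoint Z) → X}
    (hf : Continuous f) (hsurj : Surjective f) {lam : Cardinal.{u}} (hlam : ℵ₀ ≤ lam)
    (hd : tdensity X ≤ lam) : InGamma lam X := by
  rintro _ ⟨hHcl, 𝒰, h𝒰, h𝒰lam, rfl⟩
  obtain ⟨D, hD, hDd⟩ := exists_dense_mk_eq_tdensity X
  have hDlam : #D ≤ lam := hDd ▸ hd
  obtain ⟨K₀, hK₀⟩ := exists_isIrreducibleRestriction hf hsurj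
  obtain ⟨D₀, hD₀, hK₀D₀⟩ := hK₀.exists_mk_le_subset_closure hf hD
  obtain ⟨A, hA, hKA⟩ := (hHcl.preimage hf).isCompact.exists_dependsOn_of_eq_iInter
    (fun U : 𝒰 => (h𝒰 U U.2).preimage hf) (by rw [sInter_eq_iInter, preimage_iInter])
  obtain ⟨T, hTK, hT, hKT⟩ := OnePoint.exists_subset_closure_of_dependsOn hlam hKA
    (hA.trans (mul_le_of_le hlam h𝒰lam hlam)) hK₀D₀ (hD₀.trans hDlam)
    fun ξ _ => (hK₀.mk_coordValues_le hf hD ξ).trans hDlam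
  have hHT : ⋂₀ 𝒰 ⊆ closure (f '' T) := calc
    ⋂₀ 𝒰 = f '' (f ⁻¹' ⋂₀ 𝒰 ∩ K₀) := by
      rw [image_preimage_inter, hK₀.image_eq_univ, inter_univ]
    _ ⊆ f '' closure T := image_mono hKT
    _ ⊆ closure (f '' T) := image_closure_subset_closure_image hf
  exact (tdensity_le_of_subset_closure (image_subset_iff.2 hTK) hHT).trans (mk_image_le.trans hT)

theorem statement5_general {X : Type u} [TopologicalSpace X] [T2Space X]
    (hX : IsPolyadic X) (lam : Cardinal.{u}) (hlam : ℵ₀ ≤ lam)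
    (h1 : tdensity X ≤ lam) :
    InGamma lam X := by
  obtain ⟨μ, κ, -, f, hf, hsurj⟩ := hX
  exact inGamma_of_continuous_surjective (ι := κ.out) (Z := μ.out) hf hsurj hlam h1

/-- Corollary 2.4 (co:po). -/
theorem statement5 {X : Type u} [TopologicalSpace X] [CompactSpace X] [T2Space X]
    (hX : IsPolyadic X) (lam : Cardinal.{u}) (hlam : ℵ₀ ≤ lam)
    (h1 : tdensity X ≤ lam) (h2 : lam ≤ tweight X) :
    InGamma lam X :=
  statement5_general hX lam hlam h1
end
end

section
/- Let λ be an infinite cardinal, let X ∈ Δ(λ) with witnessing dense set S, and let f : X → Y be a continuous surjection onto a compact Hausdorff space Y with w(Y) ≥ λ. Then Y ∈ Δ(λ), with f[S] as a witnessing dense set; that is, Δ(λ) is closed under continuous images of weight ≥ λ. -/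
open Cardinal Set Function

universe u

noncomputable section

/-!
A continuous image of a compact space in a Hausdorff space has weight at most
`max ℵ₀ (weight)`: if `B` is a base upstairs, the sets of points whose fibre lies in a finite
union of members of `B` form a base downstairs, since fibres are compact and `f` is closed.
A subset of `f[S]` of size `< λ` is the image of a subset `T ⊆ S` of the same size, and its
closure is the image of the compact set `closure T`, hence of weight `< λ`. Finally a map
`Y → Z` with `w(Z) = λ` composed with `f` is such a map on `X`.
-/

open TopologicalSpace

theorem exists_isTopologicalBasis_mk_eq_tweight (X : Type u) [TopologicalSpace X] :
    ∃ B : Set (Set X), IsTopologicalBasis B ∧ #B = tweight X :=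
  csInf_mem (s := {c | ∃ B : Set (Set X), IsTopologicalBasis B ∧ #B = c})
    ⟨_, _, isTopologicalBasis_opens, rfl⟩

theorem tweight_le_mk_of_isTopologicalBasis {X : Type u} [TopologicalSpace X]
    {B : Set (Set X)} (hB : IsTopologicalBasis B) : tweight X ≤ #B :=
  csInf_le' ⟨B, hB, rfl⟩

theorem Cardinal.mk_finset_lt {α : Type u} {κ : Cardinal.{u}} (hκ : ℵ₀ ≤ κ) (h : #α < κ) :
    #(Finset α) < κ := by
  rcases finite_or_infinite α with hα | hα
  · exact (lt_aleph0_of_finite _).trans_le hκ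
  · rwa [mk_finset_of_infinite]

-- `(f '' Uᶜ)ᶜ` is the set of points whose whole fibre lies in `U`.
theorem TopologicalSpace.IsTopologicalBasis.compl_image_compl_biUnion {K Y : Type*}
    [TopologicalSpace K] [CompactSpace K] [TopologicalSpace Y] [T2Space Y] {f : K → Y} (hf : Continuous f)
    (hsurj : Surjective f) {B : Set (Set K)} (hB : IsTopologicalBasis B) :
    IsTopologicalBasis (range fun s : Finset B => (f '' (⋃ u ∈ s, (u : Set K))ᶜ)ᶜ) := by
  refine isTopologicalBasis_of_isOpen_of_nhds ?_ fun y V hyV hV => ?_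
  · rintro _ ⟨s, rfl⟩
    exact (hf.isClosedMap _ (isOpen_biUnion fun u _ => hB.isOpen u.2).isClosed_compl).isOpen_compl
  have hcover : f ⁻¹' {y} ⊆ ⋃ u : {u : B // (u : Set K) ⊆ f ⁻¹' V}, (u : Set K) := by
    intro x hx
    obtain ⟨u, huB, hxu, huV⟩ :=
      hB.exists_subset_of_mem_open (show f x ∈ V from hx ▸ hyV) (hV.preimage hf)
    exact mem_iUnion.2 ⟨⟨⟨u, huB⟩, huV⟩, hxu⟩
  obtain ⟨s, hs⟩ := (isClosed_singleton.preimage hf).isCompact.elim_finite_subcover _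
    (fun u => hB.isOpen u.1.2) hcover
  refine ⟨_, ⟨s.map (Embedding.subtype _), rfl⟩, ?_, ?_⟩
  · rintro ⟨x, hx, rfl⟩
    obtain ⟨u, hus, hxu⟩ := mem_iUnion₂.1 (hs rfl)
    exact hx (mem_biUnion (Finset.mem_map_of_mem _ hus) hxu)
  · intro z hz
    obtain ⟨x, rfl⟩ := hsurj z
    obtain ⟨u, hus, hxu⟩ := mem_iUnion₂.1 (not_not.1 fun hx => hz ⟨x, hx, rfl⟩)
    obtain ⟨v, -, rfl⟩ := Finset.mem_map.1 hus
    exact v.2 hxu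

theorem tweight_lt_of_continuous_surjective {K Y : Type u} [TopologicalSpace K]
    [CompactSpace K] [TopologicalSpace Y] [T2Space Y] {f : K → Y} (hf : Continuous f)
    (hsurj : Surjective f) {κ : Cardinal.{u}} (hκ : ℵ₀ ≤ κ) (h : tweight K < κ) :
    tweight Y < κ := by
  obtain ⟨B, hB, hBcard⟩ := exists_isTopologicalBasis_mk_eq_tweight K
  calc tweight Y ≤ #(range fun s : Finset B => (f '' (⋃ u ∈ s, (u : Set K))ᶜ)ᶜ) :=
        tweight_le_mk_of_isTopologicalBasis (hB.compl_image_compl_biUnion hf hsurj)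
    _ ≤ #(Finset B) := mk_range_le
    _ < κ := mk_finset_lt hκ (hBcard ▸ h)

theorem tweight_closure_image_lt {X Y : Type u} [TopologicalSpace X] [CompactSpace X]
    [TopologicalSpace Y] [T2Space Y] {f : X → Y} (hf : Continuous f) {κ : Cardinal.{u}}
    (hκ : ℵ₀ ≤ κ) {T : Set X} (hT : tweight (closure T) < κ) :
    tweight (closure (f '' T)) < κ := by
  rw [hf.isClosedMap.closure_image_eq_of_continuous hf]
  have : CompactSpace (closure T) := isCompact_iff_compactSpace.1 isClosed_closure.isCompact
  exact tweight_lt_of_continuous_surjective (hf.restrict (mapsTo_image f _))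
    (surjective_mapsTo_image_restrict f _) hκ hT

theorem DeltaWitness.image {lam : Cardinal.{u}} (hlam : ℵ₀ ≤ lam) {X Y : Type u}
    [TopologicalSpace X] [CompactSpace X] [TopologicalSpace Y] [T2Space Y] {S : Set X}
    (hS : DeltaWitness lam X S) {f : X → Y} (hf : Continuous f) (hsurj : Surjective f) :
    DeltaWitness lam Y (f '' S) := by
  obtain ⟨hdense, hsmall, himg⟩ := hS
  refine ⟨hsurj.denseRange.dense_image hf hdense, fun T hTS hT => ?_,
    fun Z _ _ g hg hgsurj hwZ => ?_⟩
  · obtain ⟨T', hT'S, hbij⟩ := SurjOn.exists_bijOn_subset hTS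
    rw [← hbij.image_eq] at hT ⊢
    rw [mk_image_eq_of_injOn _ _ hbij.injOn] at hT
    exact tweight_closure_image_lt hf hlam (hsmall T' hT'S hT)
  · rw [← image_comp]
    exact himg Z _ ‹_› (g ∘ f) (hg.comp hf) (hgsurj.comp hsurj) hwZ

theorem statement8_general (lam : Cardinal.{u}) (hlam : ℵ₀ ≤ lam)
    {X Y : Type u} [TopologicalSpace X] [CompactSpace X]
    [TopologicalSpace Y] [T2Space Y]
    (S : Set X) (hS : DeltaWitness lam X S)
    (f : X → Y) (hf : Continuous f) (hsurj : Surjective f) (hwY : lam ≤ tweight Y) :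
    InDelta lam Y ∧ DeltaWitness lam Y (f '' S) :=
  have hwit := hS.image hlam hf hsurj
  ⟨⟨hwY, _, hwit⟩, hwit⟩

/-- Δ(λ) is closed under continuous images of weight ≥ λ. -/
theorem statement8 (lam : Cardinal.{u}) (hlam : ℵ₀ ≤ lam)
    {X Y : Type u} [TopologicalSpace X] [CompactSpace X] [T2Space X]
    [TopologicalSpace Y] [CompactSpace Y] [T2Space Y]
    (S : Set X) (hwX : lam ≤ tweight X) (hS : DeltaWitness lam X S)
    (f : X → Y) (hf : Continuous f) (hsurj : Surjective f) (hwY : lam ≤ tweight Y) :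
    InDelta lam Y ∧ DeltaWitness lam Y (f '' S) :=
  statement8_general lam hlam S hS f hf hsurj hwY
end
end
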